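/- Let g ∈ L¹(ℝ) be even with bounded derivatives up to order 3 on [−1,1]. Define θ_g on the strip S_{(−2,2)} = {x+iy : |y| < 2} by θ_g(z) = (1/2π) η_g(e^{iz(·)}), where η_g(φ) = ∫_0^∞ [g(k)/(k(cosh(2k)−1))](φ(k) − φ(−k) − 2φ'(0)k) dk. Then θ_g is holomorphic on S_{(−2,2)}. -/

import Mathlib

open MeasureTheory Complex

/-- `θ_g(z) = (1/2π) η_g(e^{iz(·)})
  = (1/2π) ∫_0^∞ g(k)/(k(cosh 2k − 1)) (e^{izk} − e^{-izk} − 2izk) dk`. -/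
noncomputable def theta (g : ℝ → ℝ) (z : ℂ) : ℂ :=
  (1 / (2 * Real.pi)) *
    ∫ k in Set.Ioi (0 : ℝ),
      ((g k / (k * (Real.cosh (2 * k) - 1)) : ℝ) : ℂ) *
        (Complex.exp (Complex.I * z * k) - Complex.exp (-(Complex.I * z * k)) -
          2 * Complex.I * z * k)

/-! Differentiation under the integral sign. Since `e^{iw} + e^{-iw} - 2 = -4 sin²(w/2)` and
`cosh 2k - 1 = 2 sinh² k`, the `z`-derivative of the integrand is `-2i g(k) sin²(zk/2) / sinh² k`,
and `‖sin(x + iy)‖² = sin² x + sinh² y` bounds it by `(|Re z|²/2 + 2) |g(k)|` whenever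
`|Im z| ≤ 2`: an integrable majorant, locally uniform in `z`. The integrand itself vanishes at
`z = 0`, so the mean value inequality along `[0, z]` shows that it is integrable too. -/

theorem Complex.norm_sin_sq (u : ℂ) :
    ‖sin u‖ ^ 2 = Real.sin u.re ^ 2 + Real.sinh u.im ^ 2 := by
  have hu : sin u =
      (Real.sin u.re * Real.cosh u.im : ℝ) + (Real.cos u.re * Real.sinh u.im : ℝ) * I := by
    conv_lhs => rw [← re_add_im u]
    rw [sin_add, cos_mul_I, sin_mul_I]
    push_cast; ring
  rw [hu, Complex.sq_norm, normSq_add_mul_I, mul_pow, mul_pow, Real.cosh_sq]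
  linear_combination Real.sinh u.im ^ 2 * Real.sin_sq_add_cos_sq u.re

theorem Complex.exp_I_mul_add_exp_neg_sub_two (u : ℂ) :
    exp (I * u) + exp (-(I * u)) - 2 = -4 * sin (u / 2) ^ 2 := by
  have h := two_cos u
  rw [sin_sq, cos_sq, mul_div_cancel₀ _ two_ne_zero, mul_comm I, ← neg_mul]
  linear_combination -h

theorem Real.cosh_two_mul_sub_one (k : ℝ) : Real.cosh (2 * k) - 1 = 2 * Real.sinh k ^ 2 := by
  rw [Real.cosh_two_mul, Real.cosh_sq]; ring

theorem norm_sin_mul_half_sq_le {z : ℂ} {k : ℝ} (hk : 0 ≤ k) (hz : |z.im| ≤ 2) :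
    ‖sin (z * k / 2)‖ ^ 2 ≤ (z.re ^ 2 / 4 + 1) * Real.sinh k ^ 2 := by
  have hre : (z * k / 2).re = z.re * k / 2 := by simp
  have him : (z * k / 2).im = z.im * k / 2 := by simp
  rw [Complex.norm_sin_sq, hre, him]
  have hsin : Real.sin (z.re * k / 2) ^ 2 ≤ z.re ^ 2 / 4 * Real.sinh k ^ 2 := by
    calc Real.sin (z.re * k / 2) ^ 2 ≤ (z.re * k / 2) ^ 2 := Real.sin_sq_le_sq
      _ = z.re ^ 2 / 4 * k ^ 2 := by ring
      _ ≤ z.re ^ 2 / 4 * Real.sinh k ^ 2 := by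
        gcongr; exact Real.self_le_sinh_iff.2 hk
  have hsinh : Real.sinh (z.im * k / 2) ^ 2 ≤ Real.sinh k ^ 2 := by
    rw [← sq_abs, Real.abs_sinh, sq_le_sq₀ (Real.sinh_nonneg_iff.2 (abs_nonneg _))
      (Real.sinh_nonneg_iff.2 hk), Real.sinh_le_sinh]
    rw [abs_div, abs_mul, abs_of_nonneg hk, abs_two]
    nlinarith
  linarith

noncomputable def thetaWeight (g : ℝ → ℝ) (k : ℝ) : ℝ := g k / (k * (Real.cosh (2 * k) - 1))

noncomputable def thetaIntegrand (g : ℝ → ℝ) (z : ℂ) (k : ℝ) : ℂ :=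
  (thetaWeight g k : ℂ) * (exp (I * z * k) - exp (-(I * z * k)) - 2 * I * z * k)

noncomputable def thetaIntegrandDeriv (g : ℝ → ℝ) (z : ℂ) (k : ℝ) : ℂ :=
  (thetaWeight g k : ℂ) * (I * k * (exp (I * z * k) + exp (-(I * z * k)) - 2))

theorem hasDerivAt_thetaIntegrand (g : ℝ → ℝ) (z : ℂ) (k : ℝ) :
    HasDerivAt (thetaIntegrand g · k) (thetaIntegrandDeriv g z k) z := by
  have hlin : HasDerivAt (fun w : ℂ => I * w * k) (I * k) z := by
    simpa using ((hasDerivAt_id z).const_mul I).mul_const (k : ℂ)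
  have hneg : HasDerivAt (fun w : ℂ => -(I * w * k)) (-(I * k)) z := hlin.neg
  have hlin2 : HasDerivAt (fun w : ℂ => 2 * I * w * k) (2 * I * k) z := by
    simpa [mul_assoc] using hlin.const_mul 2
  refine (((hlin.cexp.sub hneg.cexp).sub hlin2).const_mul (thetaWeight g k : ℂ)).congr_deriv ?_
  simp only [thetaIntegrandDeriv]; ring

theorem norm_thetaIntegrandDeriv_le (g : ℝ → ℝ) {z : ℂ} {k M : ℝ} (hk : 0 < k)
    (hre : |z.re| ≤ M) (him : |z.im| ≤ 2) :
    ‖thetaIntegrandDeriv g z k‖ ≤ (M ^ 2 / 2 + 2) * |g k| := by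
  have hsinh : 0 < Real.sinh k := Real.sinh_pos_iff.2 hk
  have hderiv : thetaIntegrandDeriv g z k =
      (thetaWeight g k : ℂ) * (I * k * (-4 * sin (z * k / 2) ^ 2)) := by
    rw [thetaIntegrandDeriv, mul_assoc I z, exp_I_mul_add_exp_neg_sub_two]
  have hnorm : ‖thetaIntegrandDeriv g z k‖ =
      2 * |g k| * (‖sin (z * k / 2)‖ ^ 2 / Real.sinh k ^ 2) := by
    rw [hderiv, thetaWeight, Real.cosh_two_mul_sub_one]
    simp only [norm_mul, norm_neg, norm_pow, norm_real, norm_I, Real.norm_eq_abs, abs_div, abs_mul,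
      abs_of_pos hk, abs_of_pos hsinh, abs_two, abs_pow, RCLike.norm_ofNat]
    field_simp
    ring
  have hsin := norm_sin_mul_half_sq_le hk.le him
  have hM : z.re ^ 2 ≤ M ^ 2 := sq_le_sq' (abs_le.1 hre).1 (abs_le.1 hre).2
  rw [hnorm]
  calc 2 * |g k| * (‖sin (z * k / 2)‖ ^ 2 / Real.sinh k ^ 2)
      ≤ 2 * |g k| * (z.re ^ 2 / 4 + 1) := by
        gcongr; rwa [div_le_iff₀ (by positivity)]
    _ ≤ (M ^ 2 / 2 + 2) * |g k| := by nlinarith [abs_nonneg (g k)]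

theorem norm_thetaIntegrand_le (g : ℝ → ℝ) {z : ℂ} {k M : ℝ} (hk : 0 < k)
    (hre : |z.re| ≤ M) (him : |z.im| ≤ 2) :
    ‖thetaIntegrand g z k‖ ≤ (M ^ 2 / 2 + 2) * |g k| * ‖z‖ := by
  have hbound : ∀ w ∈ segment ℝ 0 z,
      ‖thetaIntegrandDeriv g w k‖ ≤ (M ^ 2 / 2 + 2) * |g k| := by
    rintro _ ⟨s, t, hs, ht, hst, rfl⟩
    have ht1 : t ≤ 1 := by linarith
    refine norm_thetaIntegrandDeriv_le g hk ?_ ?_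
    · simpa [abs_mul, abs_of_nonneg ht] using (mul_le_of_le_one_left (abs_nonneg _) ht1).trans hre
    · simpa [abs_mul, abs_of_nonneg ht] using (mul_le_of_le_one_left (abs_nonneg _) ht1).trans him
  have h := (convex_segment (0 : ℂ) z).norm_image_sub_le_of_norm_hasDerivWithin_le
    (fun w _ => (hasDerivAt_thetaIntegrand g w k).hasDerivWithinAt) hbound
    (left_mem_segment ℝ 0 z) (right_mem_segment ℝ 0 z)
  simpa [thetaIntegrand] using h

theorem aestronglyMeasurable_thetaWeight {g : ℝ → ℝ} {μ : Measure ℝ}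
    (hg : AEStronglyMeasurable g μ) : AEStronglyMeasurable (fun k => (thetaWeight g k : ℂ)) μ := by
  refine Complex.continuous_ofReal.comp_aestronglyMeasurable ?_
  exact (hg.aemeasurable.div (by fun_prop : Measurable fun k : ℝ =>
    k * (Real.cosh (2 * k) - 1)).aemeasurable).aestronglyMeasurable

theorem aestronglyMeasurable_thetaIntegrand {g : ℝ → ℝ} {μ : Measure ℝ}
    (hg : AEStronglyMeasurable g μ) (z : ℂ) : AEStronglyMeasurable (thetaIntegrand g z) μ :=
  (aestronglyMeasurable_thetaWeight hg).mul (by fun_prop)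

theorem aestronglyMeasurable_thetaIntegrandDeriv {g : ℝ → ℝ} {μ : Measure ℝ}
    (hg : AEStronglyMeasurable g μ) (z : ℂ) : AEStronglyMeasurable (thetaIntegrandDeriv g z) μ :=
  (aestronglyMeasurable_thetaWeight hg).mul (by fun_prop)

theorem integrableOn_thetaIntegrand {g : ℝ → ℝ} (hg : Integrable g) {z : ℂ} (hz : |z.im| ≤ 2) :
    IntegrableOn (thetaIntegrand g z) (Set.Ioi 0) := by
  refine Integrable.mono' ((hg.abs.const_mul (|z.re| ^ 2 / 2 + 2)).mul_const ‖z‖).restrict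
    (aestronglyMeasurable_thetaIntegrand hg.aestronglyMeasurable.restrict z) ?_
  filter_upwards [ae_restrict_mem measurableSet_Ioi] with k hk
  exact norm_thetaIntegrand_le g hk le_rfl hz

theorem hasDerivAt_integral_thetaIntegrand {g : ℝ → ℝ} (hg : Integrable g) {z₀ : ℂ}
    (hz₀ : |z₀.im| < 2) :
    HasDerivAt (fun z => ∫ k in Set.Ioi 0, thetaIntegrand g z k)
      (∫ k in Set.Ioi 0, thetaIntegrandDeriv g z₀ k) z₀ := by
  set M := |z₀.re| + 1
  set s := {z : ℂ | |z.re| < M ∧ |z.im| < 2}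
  have hs : s ∈ nhds z₀ := by
    refine IsOpen.mem_nhds ?_ ⟨by simp [M], hz₀⟩
    exact (isOpen_lt (continuous_abs.comp continuous_re) continuous_const).inter
      (isOpen_lt (continuous_abs.comp continuous_im) continuous_const)
  have hg' := hg.aestronglyMeasurable.restrict (s := Set.Ioi 0)
  refine (hasDerivAt_integral_of_dominated_loc_of_deriv_le hs
    (.of_forall (aestronglyMeasurable_thetaIntegrand hg'))
    (integrableOn_thetaIntegrand hg hz₀.le) (aestronglyMeasurable_thetaIntegrandDeriv hg' z₀)
    (bound := fun k => (M ^ 2 / 2 + 2) * |g k|) ?_ (hg.abs.const_mul _).restrict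
    (.of_forall fun k z _ => hasDerivAt_thetaIntegrand g z k)).2
  filter_upwards [ae_restrict_mem measurableSet_Ioi] with k hk z hz
  exact norm_thetaIntegrandDeriv_le g hk hz.1.le hz.2.le

theorem theta_holomorphic_general (g : ℝ → ℝ) (hg : Integrable g) :
    DifferentiableOn ℂ (theta g) {z : ℂ | |z.im| < 2} := fun _ hz =>
  ((hasDerivAt_integral_thetaIntegrand hg hz).differentiableAt.const_mul
    (1 / (2 * Real.pi : ℂ))).differentiableWithinAt

theorem theta_holomorphic (g : ℝ → ℝ) (hg : Integrable g)
    (heven : ∀ k, g (-k) = g k)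
    (hreg : ContDiffOn ℝ 3 g (Set.Icc (-1 : ℝ) 1))
    (hbdd : ∀ j : ℕ, j ≤ 3 → ∃ C : ℝ, ∀ x ∈ Set.Icc (-1 : ℝ) 1,
      |iteratedDeriv j g x| ≤ C) :
    DifferentiableOn ℂ (theta g) {z : ℂ | |z.im| < 2} :=
  theta_holomorphic_general g hg
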